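/- For n ≥ 1, the number of plane trees with n edges having exactly one old leaf is 2^(n-1). -/

import Mathlib

/-!
In a plane tree every vertex with children has an old leaf among its descendants: follow leftmost
children down to a leaf. So a tree with exactly one old leaf is a caterpillar: the old leaf ends
the leftmost path from the root and every other child of a vertex on that path is a leaf. Such a
tree is determined by the numbers of children along that path, which form a composition of the
number of edges, and there are `2^(n-1)` compositions of `n`.
-/

/-- A plane tree: a root together with an ordered (possibly empty) list of subtrees. -/
inductive PlaneTree where
  | node : List PlaneTree → PlaneTree

namespace PlaneTree

/-- The number of edges of a plane tree. -/
def edges : PlaneTree → ℕ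
  | node ts => (ts.attach.map (fun t => edges t.1 + 1)).sum
decreasing_by have := List.sizeOf_lt_of_mem t.2; simp at *; omega

/-- Indicator that a tree is a single vertex (i.e. the corresponding child is a leaf). -/
def isLeafInd : PlaneTree → ℕ
  | node [] => 1
  | node (_ :: _) => 0

/-- The number of old leaves: leaves that are the leftmost child of their parent. -/
def oldLeaves : PlaneTree → ℕ
  | node [] => 0
  | node (t :: ts) =>
      isLeafInd t + oldLeaves t + (ts.attach.map (fun s => oldLeaves s.1)).sum
decreasing_by
  · simp; omega
  · have := List.sizeOf_lt_of_mem s.2; simp at *; omega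

/-- The number of young leaves: leaves that are not the leftmost child of their parent. -/
def youngLeaves : PlaneTree → ℕ
  | node [] => 0
  | node (t :: ts) =>
      youngLeaves t + (ts.attach.map (fun s => isLeafInd s.1 + youngLeaves s.1)).sum
decreasing_by
  · simp; omega
  · have := List.sizeOf_lt_of_mem s.2; simp at *; omega

theorem edges_node (ts : List PlaneTree) :
    edges (node ts) = (ts.map (edges · + 1)).sum := by
  rw [edges, List.attach_map_val (f := (edges · + 1))]

theorem oldLeaves_node_cons (t : PlaneTree) (ts : List PlaneTree) :
    oldLeaves (node (t :: ts)) = isLeafInd t + oldLeaves t + (ts.map oldLeaves).sum := by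
  rw [oldLeaves, List.attach_map_val]

theorem one_le_isLeafInd_add_oldLeaves : ∀ T : PlaneTree, 1 ≤ T.isLeafInd + T.oldLeaves
  | node [] => by simp [isLeafInd]
  | node (t :: ts) => by
    have := one_le_isLeafInd_add_oldLeaves t
    rw [isLeafInd, oldLeaves_node_cons]
    omega

theorem isLeafInd_eq_zero_of_oldLeaves_ne_zero {T : PlaneTree} (h : T.oldLeaves ≠ 0) :
    T.isLeafInd = 0 := by
  obtain ⟨_ | ⟨t, ts⟩⟩ := T
  · simp [oldLeaves] at h
  · rfl

theorem eq_node_nil_of_oldLeaves_eq_zero {T : PlaneTree} (h : T.oldLeaves = 0) : T = node [] := by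
  obtain ⟨_ | ⟨t, ts⟩⟩ := T
  · rfl
  · have := one_le_isLeafInd_add_oldLeaves (node (t :: ts))
    rw [isLeafInd] at this
    omega

/-- The numbers of children of the vertices on the leftmost path from the root, top down. -/
def leftDegrees : PlaneTree → List ℕ
  | node [] => []
  | node (t :: ts) => (ts.length + 1) :: leftDegrees t

def caterpillar : List ℕ → PlaneTree
  | [] => node []
  | b :: bs => node (caterpillar bs :: List.replicate (b - 1) (node []))

theorem pos_of_mem_leftDegrees : ∀ {T : PlaneTree} {b : ℕ}, b ∈ T.leftDegrees → 0 < b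
  | node [], _, h => by simp [leftDegrees] at h
  | node (t :: ts), b, h => by
    rcases List.mem_cons.mp h with rfl | h
    · exact Nat.succ_pos _
    · exact pos_of_mem_leftDegrees h

theorem leftDegrees_caterpillar :
    ∀ {bs : List ℕ}, (∀ {b}, b ∈ bs → 0 < b) → (caterpillar bs).leftDegrees = bs
  | [], _ => rfl
  | b :: bs, hpos => by
    rw [caterpillar, leftDegrees, List.length_replicate,
      Nat.sub_add_cancel (hpos List.mem_cons_self),
      leftDegrees_caterpillar fun h => hpos (List.mem_cons_of_mem b h)]

theorem edges_caterpillar :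
    ∀ {bs : List ℕ}, (∀ {b}, b ∈ bs → 0 < b) → (caterpillar bs).edges = bs.sum
  | [], _ => by simp [caterpillar, edges_node]
  | b :: bs, hpos => by
    have hb := hpos List.mem_cons_self
    have ih := edges_caterpillar fun h => hpos (List.mem_cons_of_mem b h)
    simp only [caterpillar, edges_node, List.map_cons, List.map_replicate, List.sum_cons,
      List.sum_replicate, List.map_nil, List.sum_nil, ih, smul_eq_mul]
    omega

theorem isLeafInd_add_oldLeaves_caterpillar :
    ∀ bs : List ℕ, (caterpillar bs).isLeafInd + (caterpillar bs).oldLeaves = 1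
  | [] => by simp [caterpillar, isLeafInd, oldLeaves]
  | b :: bs => by
    have hleaf : oldLeaves (node []) = 0 := by rw [oldLeaves]
    have := isLeafInd_add_oldLeaves_caterpillar bs
    rw [caterpillar, isLeafInd, oldLeaves_node_cons, List.map_replicate, hleaf,
      List.sum_replicate, smul_zero]
    omega

theorem oldLeaves_caterpillar {bs : List ℕ} (hbs : bs ≠ []) :
    (caterpillar bs).oldLeaves = 1 := by
  obtain ⟨b, bs, rfl⟩ := List.exists_cons_of_ne_nil hbs
  have := isLeafInd_add_oldLeaves_caterpillar (b :: bs)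
  rwa [caterpillar, isLeafInd, zero_add] at this

theorem caterpillar_leftDegrees :
    ∀ {T : PlaneTree}, T.isLeafInd + T.oldLeaves = 1 → caterpillar T.leftDegrees = T
  | node [], _ => rfl
  | node (t :: ts), h => by
    rw [isLeafInd, oldLeaves_node_cons] at h
    have ht := one_le_isLeafInd_add_oldLeaves t
    have hts : ∀ s ∈ ts, s = node [] := fun s hs =>
      eq_node_nil_of_oldLeaves_eq_zero <|
        List.sum_eq_zero_iff.mp (by omega) _ (List.mem_map_of_mem hs)
    rw [leftDegrees, caterpillar, caterpillar_leftDegrees (by omega), Nat.add_sub_cancel,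
      ← List.eq_replicate_of_mem hts]

theorem caterpillar_leftDegrees_of_oldLeaves_eq_one {T : PlaneTree} (h : T.oldLeaves = 1) :
    caterpillar T.leftDegrees = T :=
  caterpillar_leftDegrees <| by rw [isLeafInd_eq_zero_of_oldLeaves_ne_zero (by omega), h]

theorem edges_eq_sum_leftDegrees {T : PlaneTree} (h : T.oldLeaves = 1) :
    T.edges = T.leftDegrees.sum := by
  conv_lhs => rw [← caterpillar_leftDegrees_of_oldLeaves_eq_one h]
  exact edges_caterpillar pos_of_mem_leftDegrees

def oneOldLeafEquivComposition {n : ℕ} (hn : 1 ≤ n) :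
    {T : PlaneTree // T.edges = n ∧ T.oldLeaves = 1} ≃ Composition n where
  toFun T := ⟨T.1.leftDegrees, pos_of_mem_leftDegrees,
    (edges_eq_sum_leftDegrees T.2.2).symm.trans T.2.1⟩
  invFun c := ⟨caterpillar c.blocks, (edges_caterpillar c.blocks_pos).trans c.blocks_sum,
    oldLeaves_caterpillar (by rw [Ne, Composition.blocks_eq_nil]; omega)⟩
  left_inv T := Subtype.ext (caterpillar_leftDegrees_of_oldLeaves_eq_one T.2.2)
  right_inv c := Composition.ext (leftDegrees_caterpillar c.blocks_pos)

end PlaneTree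

/-- The number of plane trees with `n` edges having exactly one old leaf is `2^(n-1)`. -/
theorem card_planeTrees_one_old (n : ℕ) (hn : 1 ≤ n) :
    Nat.card {T : PlaneTree // T.edges = n ∧ T.oldLeaves = 1} = 2 ^ (n - 1) := by
  rw [Nat.card_congr (PlaneTree.oneOldLeafEquivComposition hn), Nat.card_eq_fintype_card,
    composition_card]
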